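/- Let ξ ∈ C, let P, Q ∈ Z[T] be nonzero polynomials of degree at most 1 that are relatively prime in Z[T] (as polynomials, i.e., their resultant is nonzero). Then 1 ≤ H(P)|Q(ξ)| + H(Q)|P(ξ)|. -/

import Mathlib

open Polynomial

/-- Height of an integer polynomial of degree at most 1, as a real number. -/
noncomputable def HZ1 (P : Polynomial ℤ) : ℝ :=
  max |(P.coeff 0 : ℝ)| |(P.coeff 1 : ℝ)|

/-- The resultant of two polynomials of degree at most 1,
computed as the Sylvester determinant with respect to degrees 1 and 1. -/
def res11 (P Q : Polynomial ℤ) : ℤ :=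
  P.coeff 1 * Q.coeff 0 - P.coeff 0 * Q.coeff 1

/-!
The resultant is the integer combination `P₁ Q(ξ) - Q₁ P(ξ)` of the two values, so the
triangle inequality bounds the nonzero integer `res11 P Q`, hence `1`, by
`|P₁| |Q(ξ)| + |Q₁| |P(ξ)|`.
-/

theorem Polynomial.aeval_eq_of_degree_le_one {R A : Type*} [CommSemiring R] [Semiring A]
    [Algebra R A] {P : R[X]} (hP : P.degree ≤ 1) (x : A) :
    aeval x P = algebraMap R A (P.coeff 1) * x + algebraMap R A (P.coeff 0) := by
  conv_lhs => rw [eq_X_add_C_of_degree_le_one hP]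
  simp [Algebra.commutes]

theorem res11_eq_aeval_sub {A : Type*} [CommRing A] {P Q : ℤ[X]} (hP : P.degree ≤ 1)
    (hQ : Q.degree ≤ 1) (x : A) :
    (res11 P Q : A) = P.coeff 1 * aeval x Q - Q.coeff 1 * aeval x P := by
  rw [aeval_eq_of_degree_le_one hP, aeval_eq_of_degree_le_one hQ, res11]
  simp only [algebraMap_int_eq, eq_intCast, Int.cast_sub, Int.cast_mul]
  ring

theorem abs_coeff_one_le_HZ1 (P : ℤ[X]) : |(P.coeff 1 : ℝ)| ≤ HZ1 P :=
  le_max_right _ _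

theorem coprime_lower_bound_general (ξ : ℂ) (P Q : Polynomial ℤ)
    (hP : P.degree ≤ 1) (hQ : Q.degree ≤ 1)
    (hres : res11 P Q ≠ 0) :
    1 ≤ HZ1 P * ‖aeval ξ Q‖ + HZ1 Q * ‖aeval ξ P‖ := by
  calc (1 : ℝ) ≤ |(res11 P Q : ℝ)| := mod_cast Int.one_le_abs hres
    _ = ‖(res11 P Q : ℂ)‖ := (Complex.norm_intCast _).symm
    _ = ‖(P.coeff 1 : ℂ) * aeval ξ Q - (Q.coeff 1 : ℂ) * aeval ξ P‖ := by
      rw [res11_eq_aeval_sub hP hQ]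
    _ ≤ |(P.coeff 1 : ℝ)| * ‖aeval ξ Q‖ + |(Q.coeff 1 : ℝ)| * ‖aeval ξ P‖ := by
      simpa only [norm_mul, Complex.norm_intCast] using
        norm_sub_le ((P.coeff 1 : ℂ) * aeval ξ Q) ((Q.coeff 1 : ℂ) * aeval ξ P)
    _ ≤ HZ1 P * ‖aeval ξ Q‖ + HZ1 Q * ‖aeval ξ P‖ := by
      gcongr <;> exact abs_coeff_one_le_HZ1 _

theorem coprime_lower_bound (ξ : ℂ) (P Q : Polynomial ℤ)
    (hP0 : P ≠ 0) (hQ0 : Q ≠ 0) (hP : P.degree ≤ 1) (hQ : Q.degree ≤ 1)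
    (hres : res11 P Q ≠ 0) :
    1 ≤ HZ1 P * ‖aeval ξ Q‖ + HZ1 Q * ‖aeval ξ P‖ :=
  coprime_lower_bound_general ξ P Q hP hQ hres
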